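/- Let p be a positive integer, μ, λ ∈ ℝᵖ, Σ a positive definite p×p real matrix, and ν > 0. For y ∈ ℝᵖ write A(y) := λᵀ Σ^{−1/2}(y − μ) and d(y) := (y−μ)ᵀ Σ⁻¹ (y−μ). Then for every y ∈ ℝᵖ, 2 ∫_0^∞ φ_p(y; μ, u⁻¹Σ) Φ(u^{1/2} A(y)) · ((ν/2)^{ν/2}/Γ(ν/2)) u^{ν/2−1} e^{−νu/2} du = 2 t_p(y; μ, Σ, ν) · T( √((ν+p)/(ν+d(y))) · A(y) ; ν+p ), where t_p(y; μ, Σ, ν) := Γ((p+ν)/2) / ( Γ(ν/2) (πν)^{p/2} (det Σ)^{1/2} ) · (1 + d(y)/ν)^{−(p+ν)/2} is the p-variate Student-t density with ν degrees of freedom, and T(x; m) := ∫_{−∞}^x Γ((m+1)/2)/(√(mπ) Γ(m/2)) (1 + t²/m)^{−(m+1)/2} dt is the cdf of the standard univariate Student-t distribution with m degrees of freedom. That is, the skew-t density arises from the SMSN mixture with mixing distribution U ~ Gamma(ν/2, ν/2). -/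

import Mathlib

open MeasureTheory Matrix Real Set

/-- The `p`-variate normal density with mean `μ` and covariance matrix `S`. -/
noncomputable def gaussPdf {p : ℕ} (μ : Fin p → ℝ) (S : Matrix (Fin p) (Fin p) ℝ)
    (x : Fin p → ℝ) : ℝ :=
  (2 * Real.pi) ^ (-(p : ℝ) / 2) * S.det ^ (-(1 : ℝ) / 2) *
    Real.exp (-(1 / 2) * ((x - μ) ⬝ᵥ (S⁻¹ *ᵥ (x - μ))))

/-- The standard normal cumulative distribution function `Φ`. -/
noncomputable def stdNormCdf (x : ℝ) : ℝ :=
  ∫ t in Set.Iic x, (2 * Real.pi) ^ (-(1 : ℝ) / 2) * Real.exp (-t ^ 2 / 2)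

/-- The square root of a positive semidefinite matrix, as `Matrix.PosSemidef.sqrt` was defined
in the older Mathlib. -/
noncomputable def posSemidefSqrt {n : Type*} [Fintype n] [DecidableEq n]
    {A : Matrix n n ℝ} (hA : A.PosSemidef) : Matrix n n ℝ :=
  hA.1.eigenvectorUnitary.1 * diagonal ((↑) ∘ Real.sqrt ∘ hA.1.eigenvalues) *
    (star hA.1.eigenvectorUnitary : Matrix n n ℝ)

/-- The `SMSN_p(μ, S, lam; H)` density, where `S^{-1/2}` is the inverse of the unique
symmetric positive definite square root of `S`. -/
noncomputable def smsnPdf {p : ℕ} (μ lam : Fin p → ℝ) (S : Matrix (Fin p) (Fin p) ℝ)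
    (hS : S.PosDef) (H : MeasureTheory.Measure ℝ) (y : Fin p → ℝ) : ℝ :=
  2 * ∫ u, gaussPdf μ (u⁻¹ • S) y *
      stdNormCdf (Real.sqrt u * (lam ⬝ᵥ ((posSemidefSqrt hS.posSemidef)⁻¹ *ᵥ (y - μ)))) ∂H

/-- The `SMN_p(μ, S; H)` density. -/
noncomputable def smnPdf {p : ℕ} (μ : Fin p → ℝ) (S : Matrix (Fin p) (Fin p) ℝ)
    (H : MeasureTheory.Measure ℝ) (y : Fin p → ℝ) : ℝ :=
  ∫ u, gaussPdf μ (u⁻¹ • S) y ∂H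

/-- The `p`-variate Student-t density with `ν` degrees of freedom. -/
noncomputable def tPdf {p : ℕ} (μ : Fin p → ℝ) (S : Matrix (Fin p) (Fin p) ℝ) (ν : ℝ)
    (y : Fin p → ℝ) : ℝ :=
  Real.Gamma (((p : ℝ) + ν) / 2) /
      (Real.Gamma (ν / 2) * (Real.pi * ν) ^ ((p : ℝ) / 2) * Real.sqrt S.det) *
    (1 + ((y - μ) ⬝ᵥ (S⁻¹ *ᵥ (y - μ))) / ν) ^ (-((p : ℝ) + ν) / 2)

/-- The cdf of the standard univariate Student-t distribution with `m` degrees of freedom. -/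
noncomputable def tCdf (x m : ℝ) : ℝ :=
  ∫ t in Set.Iic x,
    Real.Gamma ((m + 1) / 2) / (Real.sqrt (m * Real.pi) * Real.Gamma (m / 2)) *
      (1 + t ^ 2 / m) ^ (-((m + 1) / 2))

lemma gauss_simp {p : ℕ} (μ : Fin p → ℝ) (S : Matrix (Fin p) (Fin p) ℝ) (hS : S.PosDef)
    (y : Fin p → ℝ) {u : ℝ} (hu : 0 < u) :
    gaussPdf μ (u⁻¹ • S) y =
      (2 * Real.pi) ^ (-(p : ℝ) / 2) * S.det ^ (-(1 : ℝ) / 2) * u ^ ((p : ℝ) / 2) *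
        Real.exp (-(u * ((y - μ) ⬝ᵥ (S⁻¹ *ᵥ (y - μ)))) / 2) := by
  have hinv : (u⁻¹ • S)⁻¹ = u • S⁻¹ := by
    apply Matrix.inv_eq_right_inv
    rw [Matrix.smul_mul, Matrix.mul_smul, smul_smul, inv_mul_cancel₀ hu.ne',
      Matrix.mul_nonsing_inv _ hS.det_pos.ne'.isUnit, one_smul]
  have hdet : (u⁻¹ • S).det ^ (-(1 : ℝ) / 2) = u ^ ((p : ℝ) / 2) * S.det ^ (-(1 : ℝ) / 2) := by
    rw [Matrix.det_smul, Fintype.card_fin]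
    rw [Real.mul_rpow (by positivity) hS.det_pos.le]
    congr 1
    rw [← Real.rpow_natCast u⁻¹ p, ← Real.rpow_neg_one u, ← Real.rpow_mul hu.le, ← Real.rpow_mul hu.le]
    norm_num
    ring_nf
  have hdot : (y - μ) ⬝ᵥ ((u • S⁻¹) *ᵥ (y - μ)) = u * ((y - μ) ⬝ᵥ (S⁻¹ *ᵥ (y - μ))) := by
    rw [Matrix.smul_mulVec, dotProduct_smul, smul_eq_mul]
  rw [gaussPdf, hinv, hdet, hdot]
  ring_nf

lemma cdf_expand (a : ℝ) {u : ℝ} (hu : 0 < u) :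
    stdNormCdf (Real.sqrt u * a) =
      ∫ s in Iic a, Real.sqrt u * ((2 * Real.pi) ^ (-(1 : ℝ) / 2) * Real.exp (-(u * s ^ 2) / 2)) := by
  have hsu : 0 < Real.sqrt u := Real.sqrt_pos.2 hu
  have h := MeasureTheory.Measure.setIntegral_comp_smul_of_pos (volume : Measure ℝ)
    (fun t => (2 * Real.pi) ^ (-(1 : ℝ) / 2) * Real.exp (-t ^ 2 / 2)) (Iic a) hsu
  rw [LinearOrderedField.smul_Iic hsu, Module.finrank_self, pow_one] at h
  have : (Real.sqrt u) • a = Real.sqrt u * a := rfl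
  have h2 : (∫ x in Iic (Real.sqrt u • a), (2 * Real.pi) ^ (-(1 : ℝ) / 2) * Real.exp (-x ^ 2 / 2))
      = Real.sqrt u • ∫ x in Iic a, (2 * Real.pi) ^ (-(1 : ℝ) / 2) * Real.exp (-(Real.sqrt u • x) ^ 2 / 2) := by
    rw [h, smul_smul, mul_inv_cancel₀ hsu.ne', one_smul]; rfl
  rw [stdNormCdf, ← this, h2, ← integral_smul]
  refine setIntegral_congr_fun measurableSet_Iic fun s _ => ?_
  have : (Real.sqrt u • s) ^ 2 = u * s ^ 2 := by
    rw [smul_eq_mul, mul_pow, Real.sq_sqrt hu.le]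
  rw [this, smul_eq_mul]

open ProbabilityTheory

lemma comp_smul_Iic (f : ℝ → ℝ) (a : ℝ) {κ : ℝ} (hκ : 0 < κ) :
    ∫ t in Iic (κ * a), f t = κ * ∫ s in Iic a, f (κ * s) := by
  have h := MeasureTheory.Measure.setIntegral_comp_smul_of_pos (volume : Measure ℝ) f (Iic a) hκ
  rw [LinearOrderedField.smul_Iic hκ, Module.finrank_self, pow_one] at h
  have h2 : ∫ t in Iic (κ • a), f t = κ • ∫ s in Iic a, f (κ • s) := by
    rw [h, smul_smul, mul_inv_cancel₀ hκ.ne', one_smul]; rfl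
  simpa [smul_eq_mul] using h2

-- Gamma-type integral
lemma gamma_int {α c : ℝ} (hα : 0 < α) (hc : 0 < c) :
    ∫ u in Ioi (0:ℝ), u ^ (α - 1) * Real.exp (-(c * u)) = Real.Gamma α * c ^ (-α) := by
  have h := integral_rpow_mul_exp_neg_mul_rpow (p := 1) (q := α - 1) (b := c)
    one_pos (by linarith) hc
  simp only [Real.rpow_one, sub_add_cancel, div_one, neg_mul] at h
  rw [h]; ring

-- product integrability
lemma intg {α b : ℝ} (hα : (1:ℝ)/2 < α) (hb : 0 < b) (a : ℝ) :
    Integrable (fun z : ℝ × ℝ => z.1 ^ (α - 1) * Real.exp (-((b + z.2 ^ 2) / 2 * z.1)))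
      ((volume.restrict (Ioi 0)).prod (volume.restrict (Iic a))) := by
  have hmeas : AEStronglyMeasurable
      (fun z : ℝ × ℝ => z.1 ^ (α - 1) * Real.exp (-((b + z.2 ^ 2) / 2 * z.1)))
      ((volume.restrict (Ioi 0)).prod (volume.restrict (Iic a))) := by
    apply Measurable.aestronglyMeasurable
    fun_prop
  rw [MeasureTheory.integrable_prod_iff hmeas]
  constructor
  · filter_upwards [ae_restrict_mem measurableSet_Ioi] with u hu
    have hu' : (0:ℝ) < u := hu
    have heq : (fun s : ℝ => u ^ (α - 1) * Real.exp (-((b + s ^ 2) / 2 * u)))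
        = fun s : ℝ => (u ^ (α - 1) * Real.exp (-(b / 2 * u))) * Real.exp (-(u / 2) * s ^ 2) := by
      funext s
      rw [mul_assoc, ← Real.exp_add]
      ring_nf
    exact heq ▸ ((integrable_exp_neg_mul_sq (by positivity : (0:ℝ) < u / 2)).const_mul
      _).integrableOn
  · have hg : Integrable
        (fun u : ℝ => Real.sqrt (2 * Real.pi) * (u ^ (α - 1 - 2⁻¹) * Real.exp (-(b / 2) * u)))
        (volume.restrict (Ioi 0)) := by
      have := (integrableOn_rpow_mul_exp_neg_mul_rpow (s := α - 1 - 2⁻¹) (p := 1)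
        (by linarith) one_pos (by positivity : (0:ℝ) < b / 2))
      simp only [Real.rpow_one] at this
      exact this.const_mul _
    refine Integrable.mono' hg (hmeas.norm.integral_prod_right') ?_
    filter_upwards [ae_restrict_mem measurableSet_Ioi] with u hu
    have hu' : (0:ℝ) < u := hu
    have hint : Integrable (fun s : ℝ => u ^ (α - 1) * Real.exp (-((b + s ^ 2) / 2 * u))) := by
      have heq : (fun s : ℝ => u ^ (α - 1) * Real.exp (-((b + s ^ 2) / 2 * u)))
          = fun s : ℝ => (u ^ (α - 1) * Real.exp (-(b / 2 * u))) * Real.exp (-(u / 2) * s ^ 2) := by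
        funext s
        rw [mul_assoc, ← Real.exp_add]
        ring_nf
      exact heq ▸ ((integrable_exp_neg_mul_sq (by positivity : (0:ℝ) < u / 2)).const_mul _)
    have hnn : ∀ s : ℝ, 0 ≤ u ^ (α - 1) * Real.exp (-((b + s ^ 2) / 2 * u)) := fun s => by
      positivity
    rw [Real.norm_eq_abs, abs_of_nonneg (integral_nonneg (fun s => norm_nonneg _))]
    have step1 : (∫ s in Iic a, ‖u ^ (α - 1) * Real.exp (-((b + s ^ 2) / 2 * u))‖)
        ≤ ∫ s : ℝ, u ^ (α - 1) * Real.exp (-((b + s ^ 2) / 2 * u)) := by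
      have : (fun s : ℝ => ‖u ^ (α - 1) * Real.exp (-((b + s ^ 2) / 2 * u))‖)
          = fun s : ℝ => u ^ (α - 1) * Real.exp (-((b + s ^ 2) / 2 * u)) := by
        funext s; rw [Real.norm_eq_abs, abs_of_nonneg (hnn s)]
      rw [this]
      exact setIntegral_le_integral hint (Filter.Eventually.of_forall hnn)
    refine step1.trans ?_
    have step2 : (∫ s : ℝ, u ^ (α - 1) * Real.exp (-((b + s ^ 2) / 2 * u)))
        = (u ^ (α - 1) * Real.exp (-(b / 2 * u))) * Real.sqrt (Real.pi / (u / 2)) := by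
      have heq : (fun s : ℝ => u ^ (α - 1) * Real.exp (-((b + s ^ 2) / 2 * u)))
          = fun s : ℝ => (u ^ (α - 1) * Real.exp (-(b / 2 * u))) * Real.exp (-(u / 2) * s ^ 2) := by
        funext s
        rw [mul_assoc, ← Real.exp_add]
        ring_nf
      rw [heq, MeasureTheory.integral_const_mul, integral_gaussian]
    rw [step2]
    have hsq : Real.sqrt (Real.pi / (u / 2)) = Real.sqrt (2 * Real.pi) * u ^ (-(2⁻¹ : ℝ)) := by
      have h1 : Real.pi / (u / 2) = (2 * Real.pi) / u := by
        field_simp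
      rw [h1, Real.sqrt_div (by positivity) u, Real.rpow_neg hu'.le,
        div_eq_mul_inv, Real.sqrt_eq_rpow, Real.sqrt_eq_rpow, one_div]
    rw [hsq]
    have : u ^ (α - 1 - 2⁻¹) = u ^ (α - 1) * u ^ (-(2⁻¹:ℝ)) := by
      rw [← Real.rpow_add hu']; ring_nf
    rw [this]
    ring_nf
    exact le_of_eq (by ring)


lemma const_identity (p : ℕ) (hp : 0 < p) {ν D dS : ℝ} (hν : 0 < ν) (hD : 0 ≤ D) (hdS : 0 < dS) :
    ((2 * Real.pi) ^ (-(p:ℝ)/2) * dS ^ (-(1:ℝ)/2) * (2 * Real.pi) ^ (-(1:ℝ)/2) *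
      ((ν/2) ^ (ν/2) / Real.Gamma (ν/2))) * (Real.Gamma (((p:ℝ) + ν + 1) / 2) * 2 ^ (((p:ℝ) + ν + 1) / 2))
    = (Real.Gamma (((p : ℝ) + ν) / 2) /
          (Real.Gamma (ν / 2) * (Real.pi * ν) ^ ((p : ℝ) / 2) * Real.sqrt dS) *
        (1 + D / ν) ^ (-((p : ℝ) + ν) / 2)) * (Real.sqrt ((ν + (p:ℝ)) / (ν + D)) *
        (Real.Gamma (((ν + (p:ℝ)) + 1) / 2) / (Real.sqrt ((ν + (p:ℝ)) * Real.pi) * Real.Gamma ((ν + (p:ℝ)) / 2)) *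
          (ν + D) ^ (((p:ℝ) + ν + 1) / 2))) := by
  have hπ := Real.pi_pos
  have h1 : 1 + D / ν = (ν + D) / ν := by field_simp
  have h2 : ((ν + (p:ℝ)) + 1) / 2 = ((p:ℝ) + ν + 1) / 2 := by ring
  have h3 : (ν + (p:ℝ)) / 2 = ((p:ℝ) + ν) / 2 := by ring
  rw [h1, h2, h3]
  have hb : (0:ℝ) < ν + D := by positivity
  have hm : (0:ℝ) < ν + (p:ℝ) := by positivity
  have hL : (0:ℝ) < ((2 * Real.pi) ^ (-(p:ℝ)/2) * dS ^ (-(1:ℝ)/2) * (2 * Real.pi) ^ (-(1:ℝ)/2) *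
      ((ν/2) ^ (ν/2) / Real.Gamma (ν/2))) * (Real.Gamma (((p:ℝ) + ν + 1) / 2) * 2 ^ (((p:ℝ) + ν + 1) / 2)) := by
    positivity
  have hR : (0:ℝ) < (Real.Gamma (((p : ℝ) + ν) / 2) /
          (Real.Gamma (ν / 2) * (Real.pi * ν) ^ ((p : ℝ) / 2) * Real.sqrt dS) *
        ((ν + D) / ν) ^ (-((p : ℝ) + ν) / 2)) * (Real.sqrt ((ν + (p:ℝ)) / (ν + D)) *
        (Real.Gamma (((p:ℝ) + ν + 1) / 2) / (Real.sqrt ((ν + (p:ℝ)) * Real.pi) * Real.Gamma (((p:ℝ) + ν) / 2)) *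
          (ν + D) ^ (((p:ℝ) + ν + 1) / 2))) := by
    positivity
  have key : Real.log (((2 * Real.pi) ^ (-(p:ℝ)/2) * dS ^ (-(1:ℝ)/2) * (2 * Real.pi) ^ (-(1:ℝ)/2) *
      ((ν/2) ^ (ν/2) / Real.Gamma (ν/2))) * (Real.Gamma (((p:ℝ) + ν + 1) / 2) * 2 ^ (((p:ℝ) + ν + 1) / 2)))
      = Real.log ((Real.Gamma (((p : ℝ) + ν) / 2) /
          (Real.Gamma (ν / 2) * (Real.pi * ν) ^ ((p : ℝ) / 2) * Real.sqrt dS) *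
        ((ν + D) / ν) ^ (-((p : ℝ) + ν) / 2)) * (Real.sqrt ((ν + (p:ℝ)) / (ν + D)) *
        (Real.Gamma (((p:ℝ) + ν + 1) / 2) / (Real.sqrt ((ν + (p:ℝ)) * Real.pi) * Real.Gamma (((p:ℝ) + ν) / 2)) *
          (ν + D) ^ (((p:ℝ) + ν + 1) / 2)))) := by
    simp (disch := positivity) only [Real.log_mul, Real.log_div, Real.log_rpow, Real.log_inv,
      Real.log_sqrt]
    ring
  have := congrArg Real.exp key
  rwa [Real.exp_log hL, Real.exp_log hR] at this

-- the key scalar identity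
lemma core (p : ℕ) (hp : 0 < p) (ν : ℝ) (hν : 0 < ν) (a D dS : ℝ) (hD : 0 ≤ D) (hdS : 0 < dS) :
    2 * ∫ u in Ioi (0:ℝ),
        ((2 * Real.pi) ^ (-(p : ℝ) / 2) * dS ^ (-(1 : ℝ) / 2) * u ^ ((p : ℝ) / 2) *
            Real.exp (-(u * D) / 2)) *
          stdNormCdf (Real.sqrt u * a) * gammaPDFReal (ν / 2) (ν / 2) u
      = 2 * (Real.Gamma (((p : ℝ) + ν) / 2) /
            (Real.Gamma (ν / 2) * (Real.pi * ν) ^ ((p : ℝ) / 2) * Real.sqrt dS) *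
          (1 + D / ν) ^ (-((p : ℝ) + ν) / 2)) *
        tCdf (Real.sqrt ((ν + p) / (ν + D)) * a) (ν + p) := by
  have hπ := Real.pi_pos
  have hp1 : (1:ℝ) ≤ (p:ℝ) := by exact_mod_cast hp
  set m : ℝ := ν + (p:ℝ) with hm'
  set b : ℝ := ν + D with hb'
  set α : ℝ := ((p:ℝ) + ν + 1) / 2 with hα'
  have hb : 0 < b := by positivity
  have hm : 0 < m := by positivity
  have hα : (1:ℝ)/2 < α := by rw [hα']; linarith
  have hα0 : (0:ℝ) < α := by linarith
  set K : ℝ := (2 * Real.pi) ^ (-(p:ℝ)/2) * dS ^ (-(1:ℝ)/2) * (2 * Real.pi) ^ (-(1:ℝ)/2) *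
    ((ν/2) ^ (ν/2) / Real.Gamma (ν/2)) with hK'
  -- step 1 : rewrite the integrand
  have step1 : EqOn
      (fun u : ℝ => ((2 * Real.pi) ^ (-(p : ℝ) / 2) * dS ^ (-(1 : ℝ) / 2) * u ^ ((p : ℝ) / 2) *
            Real.exp (-(u * D) / 2)) *
          stdNormCdf (Real.sqrt u * a) * gammaPDFReal (ν / 2) (ν / 2) u)
      (fun u : ℝ => K * ∫ s in Iic a, u ^ (α - 1) * Real.exp (-((b + s ^ 2) / 2 * u)))
      (Ioi 0) := by
    intro u hu
    have hu' : (0:ℝ) < u := hu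
    simp only
    rw [cdf_expand a hu', gammaPDFReal, if_pos hu'.le, ← MeasureTheory.integral_const_mul,
      ← MeasureTheory.integral_mul_const, ← MeasureTheory.integral_const_mul]
    refine setIntegral_congr_fun measurableSet_Iic fun s _ => ?_
    rw [hK']
    have hupow : u ^ ((p:ℝ)/2) * Real.sqrt u * u ^ (ν/2 - 1) = u ^ (α - 1) := by
      rw [Real.sqrt_eq_rpow, ← Real.rpow_add hu', ← Real.rpow_add hu', hα']
      ring_nf
    have hexp : Real.exp (-(u * D) / 2) * Real.exp (-(u * s ^ 2) / 2) *
        Real.exp (-(ν / 2 * u)) = Real.exp (-((b + s ^ 2) / 2 * u)) := by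
      rw [← Real.exp_add, ← Real.exp_add, hb']
      ring_nf
    calc ((2 * Real.pi) ^ (-(p : ℝ) / 2) * dS ^ (-(1 : ℝ) / 2) * u ^ ((p : ℝ) / 2) *
            Real.exp (-(u * D) / 2)) *
          (Real.sqrt u * ((2 * Real.pi) ^ (-(1 : ℝ) / 2) * Real.exp (-(u * s ^ 2) / 2))) *
          ((ν/2) ^ (ν/2) / Real.Gamma (ν/2) * u ^ (ν/2 - 1) * Real.exp (-(ν / 2 * u)))
        = ((2 * Real.pi) ^ (-(p:ℝ)/2) * dS ^ (-(1:ℝ)/2) * (2 * Real.pi) ^ (-(1:ℝ)/2) *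
            ((ν/2) ^ (ν/2) / Real.Gamma (ν/2))) *
          ((u ^ ((p:ℝ)/2) * Real.sqrt u * u ^ (ν/2 - 1)) *
           (Real.exp (-(u * D) / 2) * Real.exp (-(u * s ^ 2) / 2) *
            Real.exp (-(ν / 2 * u)))) := by ring
      _ = _ := by rw [hupow, hexp]
  rw [MeasureTheory.setIntegral_congr_fun measurableSet_Ioi step1,
    MeasureTheory.integral_const_mul,
    MeasureTheory.integral_integral_swap (intg hα hb a)]
  -- inner gamma integral
  have step3 : EqOn
      (fun s : ℝ => ∫ u in Ioi (0:ℝ), u ^ (α - 1) * Real.exp (-((b + s ^ 2) / 2 * u)))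
      (fun s : ℝ => Real.Gamma α * 2 ^ α * (b + s ^ 2) ^ (-α)) (Iic a) := by
    intro s _
    simp only
    rw [gamma_int hα0 (by positivity : (0:ℝ) < (b + s ^ 2) / 2),
      Real.div_rpow (by positivity) (by norm_num), div_eq_mul_inv,
      Real.rpow_neg (by norm_num : (0:ℝ) ≤ 2), inv_inv]
    ring
  rw [MeasureTheory.setIntegral_congr_fun measurableSet_Iic step3,
    MeasureTheory.integral_const_mul]
  -- RHS
  have κpos : 0 < Real.sqrt (m / b) := Real.sqrt_pos.2 (by positivity)
  have hT : tCdf (Real.sqrt (m / b) * a) m =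
      Real.sqrt (m / b) * ∫ s in Iic a,
        Real.Gamma ((m + 1) / 2) / (Real.sqrt (m * Real.pi) * Real.Gamma (m / 2)) *
          (1 + (Real.sqrt (m / b) * s) ^ 2 / m) ^ (-((m + 1) / 2)) := by
    rw [tCdf]
    exact comp_smul_Iic _ a κpos
  have step4 : EqOn
      (fun s : ℝ => Real.Gamma ((m + 1) / 2) / (Real.sqrt (m * Real.pi) * Real.Gamma (m / 2)) *
          (1 + (Real.sqrt (m / b) * s) ^ 2 / m) ^ (-((m + 1) / 2)))
      (fun s : ℝ => Real.Gamma ((m + 1) / 2) / (Real.sqrt (m * Real.pi) * Real.Gamma (m / 2)) *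
          (b ^ α * (b + s ^ 2) ^ (-α))) (Iic a) := by
    intro s _
    simp only
    congr 1
    have h1 : (Real.sqrt (m / b) * s) ^ 2 = m / b * s ^ 2 := by
      rw [mul_pow, Real.sq_sqrt (by positivity : (0:ℝ) ≤ m / b)]
    have h2 : 1 + (Real.sqrt (m / b) * s) ^ 2 / m = (b + s ^ 2) / b := by
      rw [h1]; field_simp
    have h3 : (m + 1) / 2 = α := by rw [hα', hm']; ring
    rw [h2, h3, Real.div_rpow (by positivity) hb.le, div_eq_mul_inv,
      Real.rpow_neg hb.le, inv_inv]
    ring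
  rw [hT, MeasureTheory.setIntegral_congr_fun measurableSet_Iic step4,
    MeasureTheory.integral_const_mul, MeasureTheory.integral_const_mul]
  -- final constants
  have hconst : K * (Real.Gamma α * 2 ^ α) =
      (Real.Gamma (((p : ℝ) + ν) / 2) /
          (Real.Gamma (ν / 2) * (Real.pi * ν) ^ ((p : ℝ) / 2) * Real.sqrt dS) *
        (1 + D / ν) ^ (-((p : ℝ) + ν) / 2)) * (Real.sqrt (m / b) *
        (Real.Gamma ((m + 1) / 2) / (Real.sqrt (m * Real.pi) * Real.Gamma (m / 2)) * b ^ α)) := by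
    rw [hK', hm', hb', hα']
    exact const_identity p hp hν hD hdS
  set I : ℝ := ∫ s in Iic a, (b + s ^ 2) ^ (-α) with hI'
  linear_combination (2 * I) * hconst

open ProbabilityTheory in
theorem stmt8 (p : ℕ) (hp : 0 < p) (μ lam : Fin p → ℝ)
    (S : Matrix (Fin p) (Fin p) ℝ) (hS : S.PosDef) (ν : ℝ) (hν : 0 < ν)
    (A : (Fin p → ℝ) → ℝ) (hA : A = fun y => lam ⬝ᵥ ((posSemidefSqrt hS.posSemidef)⁻¹ *ᵥ (y - μ)))
    (d : (Fin p → ℝ) → ℝ) (hd : d = fun y => (y - μ) ⬝ᵥ (S⁻¹ *ᵥ (y - μ))) :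
    ∀ y : Fin p → ℝ,
      2 * ∫ u in Set.Ioi (0 : ℝ),
          gaussPdf μ (u⁻¹ • S) y * stdNormCdf (Real.sqrt u * A y) * gammaPDFReal (ν / 2) (ν / 2) u
        = 2 * tPdf μ S ν y * tCdf (Real.sqrt ((ν + p) / (ν + d y)) * A y) (ν + p) := by
  intro y
  subst hA hd
  simp only
  have hD : 0 ≤ (y - μ) ⬝ᵥ (S⁻¹ *ᵥ (y - μ)) := by
    simpa using (hS.inv.posSemidef).re_dotProduct_nonneg (y - μ)
  have hcongr : EqOn
      (fun u : ℝ => gaussPdf μ (u⁻¹ • S) y *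
        stdNormCdf (Real.sqrt u * (lam ⬝ᵥ ((posSemidefSqrt hS.posSemidef)⁻¹ *ᵥ (y - μ)))) *
        gammaPDFReal (ν / 2) (ν / 2) u)
      (fun u : ℝ => ((2 * Real.pi) ^ (-(p : ℝ) / 2) * S.det ^ (-(1 : ℝ) / 2) * u ^ ((p : ℝ) / 2) *
          Real.exp (-(u * ((y - μ) ⬝ᵥ (S⁻¹ *ᵥ (y - μ)))) / 2)) *
        stdNormCdf (Real.sqrt u * (lam ⬝ᵥ ((posSemidefSqrt hS.posSemidef)⁻¹ *ᵥ (y - μ)))) *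
        gammaPDFReal (ν / 2) (ν / 2) u) (Ioi 0) := by
    intro u hu
    simp only
    rw [gauss_simp μ S hS y hu]
  rw [MeasureTheory.setIntegral_congr_fun measurableSet_Ioi hcongr]
  unfold tPdf
  exact core p hp ν hν (lam ⬝ᵥ ((posSemidefSqrt hS.posSemidef)⁻¹ *ᵥ (y - μ)))
    ((y - μ) ⬝ᵥ (S⁻¹ *ᵥ (y - μ))) S.det hD hS.det_pos
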